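/- Let C be a skeletal finite EI category satisfying the Unique Factorization Property, and let α₁ : x₁ → y₁ and α₂ : x₂ → y₂ be unfactorizable morphisms that do NOT lie in the same biset orbit (i.e., there are no automorphisms g, h with α₁ = h α₂ g). Then in the category algebra kC, the left ideals kC·α₁ and kC·α₂ intersect trivially: kC·α₁ ∩ kC·α₂ = 0. -/

import Mathlib

/-!
In a finite EI category every non-isomorphism factors into unfactorizable morphisms: a proper
factorization `β ≫ γ` of `f : a ⟶ b` strictly shrinks the set of objects lying between source
and target. If `α₁ ≫ δ₁ = α₂ ≫ δ₂` with `α₁, α₂` unfactorizable, factor both sides into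
unfactorizable paths whose first edges are `α₁` and `α₂` up to isomorphism; the UFP forces these
first edges to agree up to automorphisms, so `α₁` and `α₂` differ by an isomorphism of their
targets, an automorphism by skeletality. Hence for `α₁, α₂` in different biset orbits the basis
elements `α₁ ≫ δ` spanning `kC·α₁` are disjoint from those spanning `kC·α₂`, and linear
independence of the basis gives `kC·α₁ ∩ kC·α₂ = 0`.
-/

open CategoryTheory
open scoped Classical

/-- Witness that `A` is the category algebra `kC` of the finite category `C`: it has a
`k`-basis indexed by the morphisms of `C`, the product of two basis elements is the basis
element of their composite when composable and `0` otherwise, and the identity element is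
the sum of the identity morphisms. -/
structure CategoryAlgebraData (k : Type*) [Field k] (C : Type*) [Category C] [Fintype C]
    (A : Type*) [Ring A] [Algebra k A] where
  basis : Module.Basis (Σ x y : C, x ⟶ y) k A
  basis_mul_basis : ∀ (x₁ y₁ x₂ y₂ : C) (f : x₁ ⟶ y₁) (g : x₂ ⟶ y₂),
    basis ⟨x₁, y₁, f⟩ * basis ⟨x₂, y₂, g⟩ =
      if h : y₂ = x₁ then basis ⟨x₂, y₁, g ≫ eqToHom h ≫ f⟩ else 0
  one_def : (1 : A) = ∑ x : C, basis ⟨x, x, 𝟙 x⟩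

/-- A morphism is unfactorizable if it is not an isomorphism and in any factorization into
two morphisms one factor is an isomorphism. -/
def Unfactorizable {C : Type*} [Category C] {x z : C} (α : x ⟶ z) : Prop :=
  ¬ IsIso α ∧ ∀ (y : C) (β : x ⟶ y) (γ : y ⟶ z), α = β ≫ γ → IsIso β ∨ IsIso γ

/-- A path in a category all of whose edges are unfactorizable morphisms. -/
inductive PathUnfact {C : Type*} [Category C] : ∀ {x y : C}, Quiver.Path x y → Prop
  | nil {x : C} : PathUnfact (Quiver.Path.nil : Quiver.Path x x)
  | cons {x y z : C} {p : Quiver.Path x y} {e : y ⟶ z} :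
      PathUnfact p → Unfactorizable e → PathUnfact (p.cons e)

/-- `TwistedBy p q g'` says that the paths `p = (α₁, …, αₙ)` and `q = (β₁, …, βₙ)` pass
through the same objects and there are automorphisms `hᵢ` of the intermediate objects with
`β₁ = h₁ ∘ α₁`, `βᵢ = hᵢ ∘ αᵢ ∘ hᵢ₋₁⁻¹`, and `βₙ = g' ∘ αₙ ∘ hₙ₋₁⁻¹`, where `g'` is the
final twist at the common target. -/
inductive TwistedBy {C : Type*} [Category C] :
    ∀ {x y : C}, Quiver.Path x y → Quiver.Path x y → (y ≅ y) → Prop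
  | nil {x : C} :
      TwistedBy (Quiver.Path.nil : Quiver.Path x x) Quiver.Path.nil (Iso.refl x)
  | cons {x w y : C} {p q : Quiver.Path x w} (g : w ≅ w) (g' : y ≅ y) (e : w ⟶ y) :
      TwistedBy p q g → TwistedBy (p.cons e) (q.cons (g.inv ≫ e ≫ g'.hom)) g'

/-- The Unique Factorization Property: any two decompositions of a non-isomorphism into
unfactorizable morphisms have the same length, pass through the same intermediate objects,
and differ only by automorphisms of the intermediate objects. -/
def SatisfiesUFP (C : Type*) [Category C] : Prop :=
  ∀ {x y : C} (p q : Quiver.Path x y), PathUnfact p → PathUnfact q →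
    ¬ IsIso (composePath p) → composePath p = composePath q → TwistedBy p q (Iso.refl y)

section Factorization

variable {C : Type*} [Category C]

lemma isIso_of_ei (hEI : ∀ (x : C) (f : x ⟶ x), IsIso f) {a b : C} (f : a ⟶ b) (g : b ⟶ a) :
    IsIso f := by
  have : IsIso (f ≫ g) := hEI _ _
  have : IsIso (g ≫ f) := hEI _ _
  have : IsSplitMono f := .mk' ⟨g ≫ inv (f ≫ g), by rw [← Category.assoc, IsIso.hom_inv_id]⟩
  have : Epi f := epi_of_epi g f
  exact isIso_of_epi_of_isSplitMono f

lemma Unfactorizable.comp_isIso {x y z : C} {α : x ⟶ y} (hα : Unfactorizable α) (δ : y ⟶ z)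
    [IsIso δ] : Unfactorizable (α ≫ δ) := by
  refine ⟨fun h ↦ hα.1 (IsIso.of_isIso_comp_right α δ), fun w β γ hfac ↦ ?_⟩
  rcases hα.2 w β (γ ≫ inv δ) (by simp [← reassoc_of% hfac]) with hβ | hγ
  · exact .inl hβ
  · exact .inr (IsIso.of_isIso_comp_right γ (inv δ))

lemma PathUnfact.comp {x y z : C} {p : Quiver.Path x y} {q : Quiver.Path y z}
    (hp : PathUnfact p) (hq : PathUnfact q) : PathUnfact (p.comp q) := by
  induction hq with
  | nil => exact hp
  | cons _ he ih => exact ih.cons he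

def objectsBetween (a b : C) : Set C := {w | Nonempty (a ⟶ w) ∧ Nonempty (w ⟶ b)}

lemma objectsBetween_ssubset_of_not_isIso_right (hEI : ∀ (x : C) (f : x ⟶ x), IsIso f)
    {a w b : C} (β : a ⟶ w) (γ : w ⟶ b) (hγ : ¬ IsIso γ) :
    objectsBetween a w ⊂ objectsBetween a b :=
  ⟨fun _ ⟨⟨f⟩, ⟨g⟩⟩ ↦ ⟨⟨f⟩, ⟨g ≫ γ⟩⟩,
    fun h ↦ let ⟨_, ⟨g⟩⟩ := h ⟨⟨β ≫ γ⟩, ⟨𝟙 b⟩⟩; hγ (isIso_of_ei hEI γ g)⟩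

lemma objectsBetween_ssubset_of_not_isIso_left (hEI : ∀ (x : C) (f : x ⟶ x), IsIso f)
    {a w b : C} (β : a ⟶ w) (γ : w ⟶ b) (hβ : ¬ IsIso β) :
    objectsBetween w b ⊂ objectsBetween a b :=
  ⟨fun _ ⟨⟨f⟩, ⟨g⟩⟩ ↦ ⟨⟨β ≫ f⟩, ⟨g⟩⟩,
    fun h ↦ let ⟨⟨f⟩, _⟩ := h ⟨⟨𝟙 a⟩, ⟨β ≫ γ⟩⟩; hβ (isIso_of_ei hEI β f)⟩

lemma exists_pathUnfact_composePath_eq [Finite C] (hEI : ∀ (x : C) (f : x ⟶ x), IsIso f)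
    {a b : C} (f : a ⟶ b) (hf : ¬ IsIso f) :
    ∃ p : Quiver.Path a b, PathUnfact p ∧ composePath p = f := by
  induction hn : (objectsBetween a b).ncard using Nat.strong_induction_on generalizing a b with
  | _ n ih =>
  by_cases hu : Unfactorizable f
  · exact ⟨f.toPath, .cons .nil hu, composePath_toPath f⟩
  obtain ⟨w, β, γ, rfl, hβ, hγ⟩ :
      ∃ (w : C) (β : a ⟶ w) (γ : w ⟶ b), f = β ≫ γ ∧ ¬ IsIso β ∧ ¬ IsIso γ := by
    simpa [Unfactorizable, hf] using hu
  obtain ⟨p, hp, rfl⟩ := ih _ (hn ▸ Set.ncard_lt_ncard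
    (objectsBetween_ssubset_of_not_isIso_right hEI β γ hγ)) β hβ rfl
  obtain ⟨q, hq, rfl⟩ := ih _ (hn ▸ Set.ncard_lt_ncard
    (objectsBetween_ssubset_of_not_isIso_left hEI _ γ hβ)) γ hγ rfl
  exact ⟨p.comp q, hp.comp hq, composePath_comp p q⟩

lemma Unfactorizable.exists_pathUnfact_comp [Finite C] (hEI : ∀ (x : C) (f : x ⟶ x), IsIso f)
    {x y z : C} {α : x ⟶ y} (hα : Unfactorizable α) (δ : y ⟶ z) :
    ∃ (w : C) (h : y ≅ w) (r : Quiver.Path w z),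
      PathUnfact ((α ≫ h.hom).toPath.comp r) ∧
        composePath ((α ≫ h.hom).toPath.comp r) = α ≫ δ := by
  by_cases hδ : IsIso δ
  · exact ⟨z, asIso δ, .nil, .cons .nil (hα.comp_isIso δ), composePath_toPath _⟩
  obtain ⟨r, hr, rfl⟩ := exists_pathUnfact_composePath_eq hEI δ hδ
  refine ⟨y, Iso.refl y, r, ?_, ?_⟩
  · exact (PathUnfact.cons .nil (by simpa using hα)).comp hr
  · simp [composePath_comp]

end Factorization

lemma Quiver.Path.sigma_eq_of_toPath_comp_eq {V : Type*} [Quiver V] {a b c₁ c₂ : V}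
    {e₁ : a ⟶ c₁} {e₂ : a ⟶ c₂} {p₁ : Path c₁ b} {p₂ : Path c₂ b}
    (h : e₁.toPath.comp p₁ = e₂.toPath.comp p₂) : (⟨c₁, e₁⟩ : Σ c, a ⟶ c) = ⟨c₂, e₂⟩ := by
  induction p₁ with
  | nil =>
    cases p₂ with
    | nil => cases Path.hom_heq_of_cons_eq_cons h; rfl
    | cons p₂ e => simpa using congrArg Path.length h
  | cons p₁ e ih =>
    cases p₂ with
    | nil => simpa using congrArg Path.length h
    | cons p₂ e' =>
      obtain rfl := Path.obj_eq_of_cons_eq_cons h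
      exact ih (eq_of_heq (Path.heq_of_cons_eq_cons h))

lemma TwistedBy.exists_eq_toPath_comp {C : Type*} [Category C] {a w b : C} {e : a ⟶ w}
    {r : Quiver.Path w b} {q : Quiver.Path a b} {g : b ≅ b} (h : TwistedBy (e.toPath.comp r) q g) :
    ∃ (t : w ≅ w) (s : Quiver.Path w b), q = (e ≫ t.hom).toPath.comp s := by
  induction r with
  | nil =>
    cases h with | cons _ _ _ h => ?_
    cases h
    exact ⟨g, .nil, by simp [Quiver.Hom.toPath]⟩
  | cons r e' ih =>
    cases h with | cons _ _ _ h => ?_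
    obtain ⟨t, s, rfl⟩ := ih h
    exact ⟨t, s.cons _, (Quiver.Path.comp_cons _ _ _).symm⟩

def leftMultiples {C : Type*} [Category C] {x y : C} (α : x ⟶ y) : Set (Σ a b : C, a ⟶ b) :=
  Set.range fun δ : Σ z, y ⟶ z ↦ ⟨x, δ.1, α ≫ δ.2⟩

section UniqueFactorization

variable {C : Type*} [Category C] [Finite C]

lemma exists_iso_of_comp_eq_comp (hEI : ∀ (x : C) (f : x ⟶ x), IsIso f) (hUFP : SatisfiesUFP C)
    {x y₁ y₂ z : C} {α₁ : x ⟶ y₁} {α₂ : x ⟶ y₂} (h₁ : Unfactorizable α₁)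
    (h₂ : Unfactorizable α₂) {δ₁ : y₁ ⟶ z} {δ₂ : y₂ ⟶ z} (hδ : α₁ ≫ δ₁ = α₂ ≫ δ₂) :
    ∃ i : y₂ ≅ y₁, α₁ = α₂ ≫ i.hom := by
  have hni : ¬ IsIso (α₁ ≫ δ₁) := fun _ ↦ h₁.1 (isIso_of_ei hEI α₁ (δ₁ ≫ inv (α₁ ≫ δ₁)))
  obtain ⟨w₁, g₁, r₁, hp₁, hc₁⟩ := h₁.exists_pathUnfact_comp hEI δ₁
  obtain ⟨w₂, g₂, r₂, hp₂, hc₂⟩ := h₂.exists_pathUnfact_comp hEI δ₂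
  obtain ⟨t, s, hs⟩ := (hUFP _ _ hp₁ hp₂ (hc₁ ▸ hni) (by rw [hc₁, hc₂, hδ])).exists_eq_toPath_comp
  obtain ⟨rfl, hα⟩ := Sigma.mk.inj_iff.mp (Quiver.Path.sigma_eq_of_toPath_comp_eq hs)
  refine ⟨g₂ ≪≫ (g₁ ≪≫ t).symm, ?_⟩
  simp [reassoc_of% (eq_of_heq hα)]

lemma disjoint_leftMultiples (hEI : ∀ (x : C) (f : x ⟶ x), IsIso f)
    (hskel : ∀ x y : C, (x ≅ y) → x = y) (hUFP : SatisfiesUFP C)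
    {x₁ y₁ x₂ y₂ : C} {α₁ : x₁ ⟶ y₁} {α₂ : x₂ ⟶ y₂}
    (h₁ : Unfactorizable α₁) (h₂ : Unfactorizable α₂)
    (horb : ¬ ∃ (ex : x₂ = x₁) (ey : y₂ = y₁) (g : x₁ ≅ x₁) (h : y₁ ≅ y₁),
      α₁ = g.hom ≫ eqToHom ex.symm ≫ α₂ ≫ eqToHom ey ≫ h.hom) :
    Disjoint (leftMultiples α₁) (leftMultiples α₂) := by
  rw [Set.disjoint_left]
  rintro _ ⟨⟨z₁, δ₁⟩, rfl⟩ ⟨⟨z₂, δ₂⟩, hδ⟩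
  obtain ⟨rfl, hδ⟩ := Sigma.mk.inj_iff.mp hδ
  obtain ⟨rfl, hδ⟩ := Sigma.mk.inj_iff.mp (eq_of_heq hδ)
  obtain ⟨i, hi⟩ := exists_iso_of_comp_eq_comp hEI hUFP h₁ h₂ (eq_of_heq hδ).symm
  obtain rfl := hskel _ _ i
  exact horb ⟨rfl, rfl, Iso.refl _, i, by simpa using hi⟩

end UniqueFactorization

lemma CategoryAlgebraData.span_singleton_subset_span_leftMultiples {k : Type*} [Field k]
    {C : Type*} [Category C] [Fintype C] {A : Type*} [Ring A] [Algebra k A]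
    (hA : CategoryAlgebraData k C A) {x y : C} (α : x ⟶ y) :
    (Ideal.span {hA.basis ⟨x, y, α⟩} : Set A) ⊆
      Submodule.span k (hA.basis '' leftMultiples α) := by
  intro u hu
  obtain ⟨a, rfl⟩ := Ideal.mem_span_singleton'.mp hu
  have hbasis : Submodule.span k (Set.range hA.basis) ≤
      (Submodule.span k (hA.basis '' leftMultiples α)).comap
        (LinearMap.mulRight k (hA.basis ⟨x, y, α⟩)) := by
    rw [Submodule.span_le]
    rintro _ ⟨⟨x', y', f⟩, rfl⟩
    simp only [SetLike.mem_coe, Submodule.mem_comap, LinearMap.mulRight_apply,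
      hA.basis_mul_basis]
    split_ifs with h
    · exact Submodule.subset_span ⟨_, ⟨⟨y', eqToHom h ≫ f⟩, rfl⟩, rfl⟩
    · exact zero_mem _
  exact hbasis (hA.basis.span_eq ▸ Submodule.mem_top)

/-- If `α₁ : x₁ ⟶ y₁` and `α₂ : x₂ ⟶ y₂` are unfactorizable morphisms in a skeletal finite
EI category satisfying the UFP that do not lie in the same biset orbit, then the left
ideals `kC·α₁` and `kC·α₂` intersect trivially. -/
theorem stmt9 {k : Type*} [Field k] {C : Type*} [Category C] [Fintype C]
    [∀ x y : C, Finite (x ⟶ y)]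
    (hEI : ∀ (x : C) (f : x ⟶ x), IsIso f)
    (hskel : ∀ x y : C, (x ≅ y) → x = y)
    (hUFP : SatisfiesUFP C)
    {A : Type*} [Ring A] [Algebra k A] (hA : CategoryAlgebraData k C A)
    {x₁ y₁ x₂ y₂ : C} (α₁ : x₁ ⟶ y₁) (α₂ : x₂ ⟶ y₂)
    (h₁ : Unfactorizable α₁) (h₂ : Unfactorizable α₂)
    (horb : ¬ ∃ (ex : x₂ = x₁) (ey : y₂ = y₁) (g : x₁ ≅ x₁) (h : y₁ ≅ y₁),
      α₁ = g.hom ≫ eqToHom ex.symm ≫ α₂ ≫ eqToHom ey ≫ h.hom) :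
    Ideal.span {hA.basis ⟨x₁, y₁, α₁⟩} ⊓ Ideal.span {hA.basis ⟨x₂, y₂, α₂⟩} = ⊥ := by
  have hdisj := hA.basis.linearIndependent.disjoint_span_image
    (disjoint_leftMultiples hEI hskel hUFP h₁ h₂ horb)
  refine eq_bot_iff.mpr fun u ⟨hu₁, hu₂⟩ ↦ (Submodule.mem_bot A).mpr ?_
  exact (Submodule.mem_bot k).mp <| hdisj.le_bot
    ⟨hA.span_singleton_subset_span_leftMultiples α₁ hu₁,
      hA.span_singleton_subset_span_leftMultiples α₂ hu₂⟩
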